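/- Along a helix Γ(v) = T(u₀, v) of the twizzler T(u,v) = e^{iv}γ(u) + m v e₃, the flux of the vertical Killing field Y = e₃ through the outward conormal satisfies ∮_Γ Y·η = -(2π/√g) m (γ'·iγ) evaluated at u₀, where η is the unit conormal obtained by Gram–Schmidt from T_u against T_v and √g is the area density. -/

import Mathlib

open Complex Set Real

def dot3 (a b : Fin 3 → ℝ) : ℝ := a 0 * b 0 + a 1 * b 1 + a 2 * b 2

def cdot (z w : ℂ) : ℝ := (z * (starRingEnd ℂ) w).re

noncomputable def twz (γ : ℝ → ℂ) (m u v : ℝ) : Fin 3 → ℝ :=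
  ![(Complex.exp ((v : ℂ) * Complex.I) * γ u).re,
    (Complex.exp ((v : ℂ) * Complex.I) * γ u).im, m * v]

noncomputable def twzU (γ : ℝ → ℂ) (m u v : ℝ) : Fin 3 → ℝ :=
  deriv (fun w => twz γ m w v) u

noncomputable def twzV (γ : ℝ → ℂ) (m u v : ℝ) : Fin 3 → ℝ :=
  deriv (fun w => twz γ m u w) v

noncomputable def conor (γ : ℝ → ℂ) (m u v : ℝ) : Fin 3 → ℝ :=
  let w := twzU γ m u v -
    (dot3 (twzU γ m u v) (twzV γ m u v) / dot3 (twzV γ m u v) (twzV γ m u v)) •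
      twzV γ m u v
  (1 / Real.sqrt (dot3 w w)) • w

/-!
Both tangent vectors are obtained from vectors at `v = 0` by the rotation `e^{iv}` about the
`e₃`-axis: `T_u = e^{iv} γ'` and `T_v = (i e^{iv} γ, m)`. Hence their Gram matrix, and with it
the integrand `(η · e₃) |T_v|`, does not depend on `v`. For `x = T_u` horizontal, Gram–Schmidt
gives `w = x - (x·y / y·y) y` with `|w|² = g / |y|²` and `w₃ = -(x·y) m / |y|²`, so
`(η · e₃) |T_v| = -(T_u · T_v) m / √g`, and the integral over `[0, 2π]` is `2π` times this.
-/

lemma cdot_self (z : ℂ) : cdot z z = normSq z := by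
  simp [cdot, mul_conj]

lemma cdot_mul_mul_left (c z w : ℂ) : cdot (c * z) (c * w) = normSq c * cdot z w := by
  have h : c * z * (starRingEnd ℂ) (c * w) = (normSq c : ℂ) * (z * (starRingEnd ℂ) w) := by
    rw [map_mul, ← mul_conj]; ring
  rw [cdot, h, re_ofReal_mul, cdot]

lemma normSq_exp_ofReal_mul_I (v : ℝ) : normSq (exp ((v : ℂ) * I)) = 1 := by
  rw [normSq_eq_norm_sq, norm_exp_ofReal_mul_I, one_pow]

lemma dot3_vec (z w : ℂ) (x y : ℝ) :
    dot3 ![z.re, z.im, x] ![w.re, w.im, y] = cdot z w + x * y := by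
  simp [dot3, cdot, mul_re]

lemma dot3_sub_smul_self (x y : Fin 3 → ℝ) (k : ℝ) :
    dot3 (x - k • y) (x - k • y) = dot3 x x - 2 * k * dot3 x y + k ^ 2 * dot3 y y := by
  simp only [dot3, Pi.sub_apply, Pi.smul_apply, smul_eq_mul]
  ring

lemma dot3_smul_e₃ (c : ℝ) (w : Fin 3 → ℝ) : dot3 (c • w) ![0, 0, 1] = c * w 2 := by
  simp [dot3]

lemma gramSchmidt_vertical_mul_norm (x y : Fin 3 → ℝ) (hx : x 2 = 0) (hy : 0 < dot3 y y) :
    let w := x - (dot3 x y / dot3 y y) • y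
    dot3 ((1 / √(dot3 w w)) • w) ![0, 0, 1] * √(dot3 y y)
      = -(dot3 x y * y 2) / √(dot3 x x * dot3 y y - dot3 x y ^ 2) := by
  set A := dot3 x y
  set B := dot3 y y
  set G := dot3 x x * B - A ^ 2
  intro w
  have hw2 : w 2 = -(A / B * y 2) := by simp [w, hx]
  have hww : dot3 w w = G / B := by
    simp only [w, dot3_sub_smul_self]
    field_simp
    ring
  have hsB : √B * √B = B := mul_self_sqrt hy.le
  rw [dot3_smul_e₃, hw2, hww, sqrt_div' _ hy.le, one_div_div]
  calc √B / √G * -(A / B * y 2) * √B = (√B * √B / B) * (-(A * y 2) / √G) := by ring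
    _ = -(A * y 2) / √G := by rw [hsB, div_self hy.ne', one_mul]

lemma hasDerivAt_re_im_vec {f : ℝ → ℂ} {h : ℝ → ℝ} {f' : ℂ} {h' t : ℝ}
    (hf : HasDerivAt f f' t) (hh : HasDerivAt h h' t) :
    HasDerivAt (fun s => ![(f s).re, (f s).im, h s]) ![f'.re, f'.im, h'] t := by
  rw [hasDerivAt_pi]
  intro i
  fin_cases i
  · exact reCLM.hasFDerivAt.comp_hasDerivAt t hf
  · exact imCLM.hasFDerivAt.comp_hasDerivAt t hf
  · exact hh

lemma twzU_eq (γ : ℝ → ℂ) (m u v : ℝ) (hγ : DifferentiableAt ℝ γ u) :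
    twzU γ m u v =
      ![(exp ((v : ℂ) * I) * deriv γ u).re, (exp ((v : ℂ) * I) * deriv γ u).im, 0] :=
  (hasDerivAt_re_im_vec (hγ.hasDerivAt.const_mul _) (hasDerivAt_const u (m * v))).deriv

lemma twzV_eq (γ : ℝ → ℂ) (m u v : ℝ) :
    twzV γ m u v =
      ![(exp ((v : ℂ) * I) * (I * γ u)).re, (exp ((v : ℂ) * I) * (I * γ u)).im, m] := by
  have hexp : HasDerivAt (fun s : ℝ => exp ((s : ℂ) * I)) (exp ((v : ℂ) * I) * I) v := by
    simpa using ((hasDerivAt_id (v : ℂ)).mul_const I).cexp.comp_ofReal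
  have hrot : HasDerivAt (fun s : ℝ => exp ((s : ℂ) * I) * γ u)
      (exp ((v : ℂ) * I) * (I * γ u)) v := by
    simpa [mul_assoc, mul_comm I] using hexp.mul_const (γ u)
  have hlin : HasDerivAt (fun s : ℝ => m * s) m v :=
    ((hasDerivAt_id' v).const_mul m).congr_deriv (mul_one m)
  exact (hasDerivAt_re_im_vec hrot hlin).deriv

lemma dot3_twzU_twzU {γ : ℝ → ℂ} {u : ℝ} (m v : ℝ) (hγ : DifferentiableAt ℝ γ u) :
    dot3 (twzU γ m u v) (twzU γ m u v) = normSq (deriv γ u) := by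
  rw [twzU_eq γ m u v hγ, dot3_vec, cdot_mul_mul_left, normSq_exp_ofReal_mul_I, cdot_self]
  ring

lemma dot3_twzU_twzV {γ : ℝ → ℂ} {u : ℝ} (m v : ℝ) (hγ : DifferentiableAt ℝ γ u) :
    dot3 (twzU γ m u v) (twzV γ m u v) = cdot (deriv γ u) (I * γ u) := by
  rw [twzU_eq γ m u v hγ, twzV_eq, dot3_vec, cdot_mul_mul_left, normSq_exp_ofReal_mul_I]
  ring

lemma dot3_twzV_twzV (γ : ℝ → ℂ) (m u v : ℝ) :
    dot3 (twzV γ m u v) (twzV γ m u v) = normSq (γ u) + m ^ 2 := by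
  rw [twzV_eq, dot3_vec, cdot_mul_mul_left, normSq_exp_ofReal_mul_I, cdot_self, normSq_mul,
    normSq_I]
  ring

lemma conor_flux_density {γ : ℝ → ℂ} {m u : ℝ} (hm : 0 < m)
    (hγ : DifferentiableAt ℝ γ u) (v : ℝ) :
    dot3 (conor γ m u v) ![0, 0, 1] * √(dot3 (twzV γ m u v) (twzV γ m u v))
      = -(m * cdot (deriv γ u) (I * γ u)) / √(normSq (deriv γ u) * (normSq (γ u) + m ^ 2)
          - cdot (deriv γ u) (I * γ u) ^ 2) := by
  have hV : 0 < dot3 (twzV γ m u v) (twzV γ m u v) := by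
    rw [dot3_twzV_twzV]; exact add_pos_of_nonneg_of_pos (normSq_nonneg _) (pow_pos hm 2)
  have hU₂ : twzU γ m u v 2 = 0 := by simp [twzU_eq γ m u v hγ]
  have hV₂ : twzV γ m u v 2 = m := by simp [twzV_eq]
  rw [conor, gramSchmidt_vertical_mul_norm _ _ hU₂ hV, hV₂, dot3_twzU_twzU m v hγ,
    dot3_twzV_twzV, dot3_twzU_twzV m v hγ, mul_comm m]

theorem stmt_8_general (a b m : ℝ) (hm : 0 < m) (γ : ℝ → ℂ)
    (hγ : ContDiffOn ℝ 2 γ (Ioo a b))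
    (u₀ : ℝ) (hu₀ : u₀ ∈ Ioo a b) :
    ∫ v in (0:ℝ)..(2 * π),
        dot3 (conor γ m u₀ v) ![0, 0, 1] *
          Real.sqrt (dot3 (twzV γ m u₀ v) (twzV γ m u₀ v))
      = -(2 * π / Real.sqrt (dot3 (twzU γ m u₀ 0) (twzU γ m u₀ 0) *
            dot3 (twzV γ m u₀ 0) (twzV γ m u₀ 0) -
            (dot3 (twzU γ m u₀ 0) (twzV γ m u₀ 0)) ^ 2)) *
          (m * cdot (deriv γ u₀) (Complex.I * γ u₀)) := by
  have hγ₀ : DifferentiableAt ℝ γ u₀ :=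
    (hγ.contDiffAt (isOpen_Ioo.mem_nhds hu₀)).differentiableAt (by norm_num)
  rw [intervalIntegral.integral_congr (fun v _ => conor_flux_density hm hγ₀ v),
    intervalIntegral.integral_const, smul_eq_mul, dot3_twzU_twzU m 0 hγ₀, dot3_twzV_twzV,
    dot3_twzU_twzV m 0 hγ₀]
  ring

/-- along the helix `v ↦ T(u₀,v)`, `v ∈ [0,2π]`, the flux of the vertical
Killing field `Y = e₃` through the conormal is
`∮ Y·η ds = -(2π/√g)·m·(γ'·iγ)` evaluated at `u₀`. -/
theorem stmt_8 (a b m : ℝ) (hm : 0 < m) (γ : ℝ → ℂ)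
    (hγ : ContDiffOn ℝ 2 γ (Ioo a b))
    (himm : ∀ u ∈ Ioo a b, deriv γ u ≠ 0)
    (u₀ : ℝ) (hu₀ : u₀ ∈ Ioo a b) :
    ∫ v in (0:ℝ)..(2 * π),
        dot3 (conor γ m u₀ v) ![0, 0, 1] *
          Real.sqrt (dot3 (twzV γ m u₀ v) (twzV γ m u₀ v))
      = -(2 * π / Real.sqrt (dot3 (twzU γ m u₀ 0) (twzU γ m u₀ 0) *
            dot3 (twzV γ m u₀ 0) (twzV γ m u₀ 0) -
            (dot3 (twzU γ m u₀ 0) (twzV γ m u₀ 0)) ^ 2)) *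
          (m * cdot (deriv γ u₀) (Complex.I * γ u₀)) :=
  stmt_8_general a b m hm γ hγ u₀ hu₀
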